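/- For every density matrix ρ on ℂ^d, M_g(ρ) ≤ 1 − (1 − M_Re(ρ))²; equivalently, F(ρ, Re(ρ))² ≤ (1 + F(ρ, ρ*))/2. -/

import Mathlib

open Matrix Complex ComplexOrder Classical

/-- The positive semidefinite square root of a matrix (junk value `0` if not PSD). -/
noncomputable def psqrt {n : Type*} [Fintype n] [DecidableEq n] (A : Matrix n n ℂ) :
    Matrix n n ℂ :=
  if h : A.PosSemidef then
    (h.1.eigenvectorUnitary : Matrix n n ℂ) * diagonal ((↑) ∘ (√·) ∘ h.1.eigenvalues) *
      (star h.1.eigenvectorUnitary : Matrix n n ℂ)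
  else 0

/-- Entrywise complex conjugate of a matrix. -/
def mconj {m n : Type*} (A : Matrix m n ℂ) : Matrix m n ℂ := A.map (starRingEnd ℂ)

/-- Fidelity `F(ρ,σ) = Tr √(√ρ σ √ρ)`. -/
noncomputable def fidelity {n : Type*} [Fintype n] [DecidableEq n] (ρ σ : Matrix n n ℂ) : ℝ :=
  ((psqrt (psqrt ρ * σ * psqrt ρ)).trace).re

/-- The real part state `Re(ρ) = (ρ + ρ*)/2`. -/
noncomputable def reState {n : Type*} (ρ : Matrix n n ℂ) : Matrix n n ℂ :=
  ((1 : ℂ)/2) • (ρ + mconj ρ)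

/-- The imaginarity measure `M_Re(ρ) = 1 - F(ρ, Re(ρ))`. -/
noncomputable def MRe {n : Type*} [Fintype n] [DecidableEq n] (ρ : Matrix n n ℂ) : ℝ :=
  1 - fidelity ρ (reState ρ)

/-- A density matrix: positive semidefinite with trace 1. -/
def IsDensityMatrix {n : Type*} [Fintype n] (ρ : Matrix n n ℂ) : Prop :=
  ρ.PosSemidef ∧ ρ.trace = 1

/-- The geometric imaginarity `M_g(ρ) = (1/2)(1 - F(ρ, ρ*))`. -/
noncomputable def Mg {n : Type*} [Fintype n] [DecidableEq n] (ρ : Matrix n n ℂ) : ℝ :=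
  (1/2) * (1 - fidelity ρ (mconj ρ))

/-!
Uhlmann's theorem in matrix form: `F(ρ, σ) ≥ |Tr(Aᴴ C)|` whenever `A Aᴴ = ρ` and `C Cᴴ = σ`, with
equality for `C = √σ` and a suitable `A`. Both halves come from the polar decomposition
`X = √(X Xᴴ) U` with `U` unitary, and Cauchy–Schwarz for `⟪X, Y⟫ = Tr(Xᴴ Y)`.

Let `τ = Re ρ` and pick `A` with `A Aᴴ = ρ` and `Tr(Aᴴ √τ) = F(ρ, τ)`. Since `√τ` is real, `Ā`
satisfies `Ā Āᴴ = ρ̄` and `Tr(Āᴴ √τ) = F(ρ, τ)` too, so Cauchy–Schwarz for `√τ` and `A + Ā` gives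
`4 F(ρ, τ)² ≤ Tr τ · Tr((A + Ā)ᴴ (A + Ā)) = 2 + 2 Re Tr(Aᴴ Ā) ≤ 2 + 2 F(ρ, ρ̄)`.
-/

open scoped MatrixOrder

section Sqrt

variable {n : Type*} [Fintype n] [DecidableEq n] {A B : Matrix n n ℂ}

theorem psqrt_eq_cfcSqrt (hA : A.PosSemidef) : psqrt A = CFC.sqrt A := by
  rw [psqrt, dif_pos hA, CFC.sqrt_eq_cfc, cfc_nnreal_eq_real _ A, hA.1.cfc_eq, IsHermitian.cfc,
    Unitary.conjStarAlgAut_apply]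
  congr 3
  funext i
  simp [max_eq_left (hA.eigenvalues_nonneg i)]

theorem posSemidef_psqrt (hA : A.PosSemidef) : (psqrt A).PosSemidef := by
  rw [psqrt_eq_cfcSqrt hA]
  exact (CFC.sqrt_nonneg A).posSemidef

theorem psqrt_mul_psqrt (hA : A.PosSemidef) : psqrt A * psqrt A = A := by
  rw [psqrt_eq_cfcSqrt hA]
  exact CFC.sqrt_mul_sqrt_self A hA.nonneg

theorem psqrt_mul_self (hB : B.PosSemidef) : psqrt (B * B) = B := by
  have hBB : (B * B).PosSemidef := by simpa [hB.1.eq] using posSemidef_conjTranspose_mul_self B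
  rw [psqrt_eq_cfcSqrt hBB, CFC.sqrt_mul_self B hB.nonneg]

end Sqrt

section Conj

variable {l m n : Type*}

theorem mconj_mul [Fintype m] (A : Matrix l m ℂ) (B : Matrix m n ℂ) :
    mconj (A * B) = mconj A * mconj B :=
  Matrix.map_mul

theorem mconj_mconj (A : Matrix m n ℂ) : mconj (mconj A) = A := by
  ext i j
  simp [mconj]

theorem conjTranspose_mconj (A : Matrix m n ℂ) : (mconj A)ᴴ = mconj Aᴴ := by
  ext i j
  simp [mconj]

theorem trace_mconj [Fintype n] (A : Matrix n n ℂ) : (mconj A).trace = star A.trace := by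
  simp [Matrix.trace, mconj]

theorem Matrix.PosSemidef.mconj {A : Matrix n n ℂ} (hA : A.PosSemidef) :
    (mconj A).PosSemidef := by
  have h : _root_.mconj A = Aᴴᵀ := by
    ext i j
    simp [_root_.mconj]
  exact h ▸ hA.conjTranspose.transpose

theorem psqrt_mconj [Fintype n] [DecidableEq n] {A : Matrix n n ℂ} (hA : A.PosSemidef) :
    psqrt (mconj A) = mconj (psqrt A) := by
  conv_lhs => rw [← psqrt_mul_psqrt hA, mconj_mul]
  exact psqrt_mul_self (posSemidef_psqrt hA).mconj

end Conj

section Trace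

theorem norm_trace_conjTranspose_mul_sq_le {m n 𝕜 : Type*} [Fintype m] [Fintype n] [RCLike 𝕜]
    (X Y : Matrix m n 𝕜) :
    ‖(Xᴴ * Y).trace‖ ^ 2 ≤ RCLike.re (Xᴴ * X).trace * RCLike.re (Yᴴ * Y).trace := by
  let e : Matrix m n 𝕜 → EuclideanSpace 𝕜 (m × n) := fun M ↦ WithLp.toLp 2 fun p ↦ M p.1 p.2
  have he : ∀ M N : Matrix m n 𝕜, inner 𝕜 (e M) (e N) = (Mᴴ * N).trace := fun M N ↦ by
    simp [e, PiLp.inner_apply, Matrix.trace, Matrix.mul_apply, Fintype.sum_prod_type,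
      Finset.sum_comm (γ := m), mul_comm]
  have h := inner_mul_inner_self_le (𝕜 := 𝕜) (e X) (e Y)
  rwa [norm_inner_symm (e Y), he, he, he, ← sq] at h

variable {n : Type*} [Fintype n] [DecidableEq n]

theorem norm_trace_mul_le_re_trace {H U : Matrix n n ℂ} (hH : H.PosSemidef)
    (hU : U ∈ unitaryGroup n ℂ) : ‖(H * U).trace‖ ≤ H.trace.re := by
  set R := psqrt H
  have hR : Rᴴ = R := (posSemidef_psqrt hH).1.eq
  have hRR : R * R = H := psqrt_mul_psqrt hH
  have hRU : ((R * U)ᴴ * (R * U)).trace = H.trace := by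
    rw [conjTranspose_mul, hR, Matrix.mul_assoc, trace_mul_comm, ← Matrix.mul_assoc,
      Matrix.mul_assoc, ← star_eq_conjTranspose, mem_unitaryGroup_iff.mp hU, Matrix.mul_one, hRR]
  have hCS := norm_trace_conjTranspose_mul_sq_le R (R * U)
  rw [hRU, hR, ← Matrix.mul_assoc, hRR] at hCS
  have hH0 : 0 ≤ H.trace.re := (Complex.le_def.mp hH.trace_nonneg).1
  simp only [RCLike.re_to_complex] at hCS
  nlinarith [norm_nonneg (H * U).trace]

end Trace

section Polar

variable {n : Type*} [Fintype n] [DecidableEq n]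

theorem exists_mem_unitaryGroup_eq_mul_diagonal_sqrt {Y : Matrix n n ℂ} {d : n → ℝ}
    (hY : Yᴴ * Y = diagonal (fun i ↦ (d i : ℂ))) :
    ∃ W ∈ unitaryGroup n ℂ, Y = W * diagonal (fun i ↦ (√(d i) : ℂ)) := by
  let y : n → EuclideanSpace ℂ n := fun i ↦ WithLp.toLp 2 fun k ↦ Y k i
  have hy : ∀ i j, inner ℂ (y i) (y j) = if i = j then (d i : ℂ) else 0 := fun i j ↦ by
    simpa [y, PiLp.inner_apply, Matrix.mul_apply, diagonal_apply, mul_comm] using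
      congrFun (congrFun hY i) j
  have hd : ∀ i, ‖y i‖ ^ 2 = d i := fun i ↦ by
    have h := inner_self_eq_norm_sq (𝕜 := ℂ) (y i)
    rw [hy, if_pos rfl] at h
    simpa using h.symm
  have hsqrt : ∀ i, ((√(d i) : ℝ) : ℂ) ^ 2 = d i := fun i ↦ by
    exact_mod_cast Real.sq_sqrt (hd i ▸ sq_nonneg _)
  have hne : ∀ i, d i ≠ 0 → ((√(d i) : ℝ) : ℂ) ≠ 0 := fun i hi h ↦
    hi (by simpa [h] using (hsqrt i).symm)
  -- The nonzero columns of `Y`, normalized, extend to an orthonormal basis: its matrix is `W`.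
  let s : Set n := {i | d i ≠ 0}
  let v : n → EuclideanSpace ℂ n := fun i ↦ ((√(d i))⁻¹ : ℂ) • y i
  have hv : Orthonormal ℂ (s.domRestrict v) := by
    rw [orthonormal_iff_ite]
    rintro ⟨i, hi⟩ ⟨j, -⟩
    simp only [Set.domRestrict_apply, Subtype.mk.injEq, v, inner_smul_left, inner_smul_right, hy]
    split_ifs with h
    · subst h
      have := hne i hi
      rw [map_inv₀, Complex.conj_ofReal, ← hsqrt]
      field_simp
    · simp
  obtain ⟨b, hb⟩ := hv.exists_orthonormalBasis_extension_of_card_eq (by simp)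
  refine ⟨_, (EuclideanSpace.basisFun n ℂ).toMatrix_orthonormalBasis_mem_unitary b, ?_⟩
  ext k i
  simp only [mul_diagonal, Module.Basis.toMatrix_apply, OrthonormalBasis.coe_toBasis_repr_apply,
    EuclideanSpace.basisFun_repr]
  by_cases hi : d i = 0
  · have hyi : y i = 0 := by
      rw [← norm_eq_zero, ← sq_eq_zero_iff, hd, hi]
    simpa [hi, y] using congrArg (fun w : EuclideanSpace ℂ n ↦ w k) hyi
  · have := hne i hi
    rw [hb i hi]
    simp [v, y]
    field_simp

theorem exists_mem_unitaryGroup_eq_psqrt_mul (X : Matrix n n ℂ) :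
    ∃ U ∈ unitaryGroup n ℂ, X = psqrt (X * Xᴴ) * U := by
  have hH := posSemidef_self_mul_conjTranspose X
  rw [psqrt, dif_pos hH]
  set V : Matrix n n ℂ := (hH.1.eigenvectorUnitary : Matrix n n ℂ)
  have hV : V * star V = 1 := Unitary.coe_mul_star_self _
  have hV' : star V * V = 1 := Unitary.coe_star_mul_self _
  have hYY : (star V * X) * (star V * X)ᴴ = diagonal (fun i ↦ (hH.1.eigenvalues i : ℂ)) := by
    have h := hH.1.conjStarAlgAut_star_eigenvectorUnitary
    rw [Unitary.conjStarAlgAut_star_apply] at h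
    rw [conjTranspose_mul, ← star_eq_conjTranspose (star V), star_star]
    convert h using 1
    · simp only [V, Matrix.mul_assoc]
    · rfl
  obtain ⟨W, hW, hYW⟩ :=
    exists_mem_unitaryGroup_eq_mul_diagonal_sqrt (by rwa [conjTranspose_conjTranspose])
  refine ⟨V * star W, mul_mem (SetLike.coe_mem _) (Unitary.star_mem hW), ?_⟩
  have hY : star V * X = diagonal (fun i ↦ (√(hH.1.eigenvalues i) : ℂ)) * star W := by
    rw [← conjTranspose_conjTranspose (star V * X), hYW, conjTranspose_mul,
      diagonal_conjTranspose]
    congr 2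
    ext i
    simp
  calc X = V * (star V * X) := by rw [← Matrix.mul_assoc, hV, Matrix.one_mul]
    _ = _ := by
      rw [hY, Matrix.mul_assoc _ (star V), ← Matrix.mul_assoc (star V), hV', Matrix.one_mul]
      simp only [Matrix.mul_assoc]
      rfl

end Polar

section Uhlmann

variable {n : Type*} [Fintype n] [DecidableEq n]

theorem fidelity_eq_re_trace_psqrt {ρ σ : Matrix n n ℂ} (hρ : ρ.PosSemidef) (hσ : σ.PosSemidef) :
    fidelity ρ σ =
      (psqrt ((psqrt ρ * psqrt σ) * (psqrt ρ * psqrt σ)ᴴ)).trace.re := by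
  rw [fidelity, conjTranspose_mul, (posSemidef_psqrt hρ).1.eq, (posSemidef_psqrt hσ).1.eq]
  conv_lhs => rw [← psqrt_mul_psqrt hσ]
  simp only [Matrix.mul_assoc]

theorem norm_trace_conjTranspose_mul_le_fidelity (A C : Matrix n n ℂ) :
    ‖(Aᴴ * C).trace‖ ≤ fidelity (A * Aᴴ) (C * Cᴴ) := by
  obtain ⟨U₁, hU₁, hA⟩ := exists_mem_unitaryGroup_eq_psqrt_mul A
  obtain ⟨U₂, hU₂, hC⟩ := exists_mem_unitaryGroup_eq_psqrt_mul C
  have hP := posSemidef_self_mul_conjTranspose A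
  have hQ := posSemidef_self_mul_conjTranspose C
  set P := psqrt (A * Aᴴ)
  set Q := psqrt (C * Cᴴ)
  obtain ⟨U₃, hU₃, hPQ⟩ := exists_mem_unitaryGroup_eq_psqrt_mul (P * Q)
  have hS := posSemidef_psqrt (posSemidef_self_mul_conjTranspose (P * Q))
  set S := psqrt ((P * Q) * (P * Q)ᴴ)
  have htr : (Aᴴ * C).trace = (S * (U₃ * U₂ * star U₁)).trace := by
    rw [hA, hC, conjTranspose_mul, (posSemidef_psqrt hP).1.eq, Matrix.mul_assoc,
      ← Matrix.mul_assoc P, hPQ, star_eq_conjTranspose, trace_mul_comm]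
    simp only [Matrix.mul_assoc]
  rw [htr, fidelity_eq_re_trace_psqrt hP hQ]
  exact norm_trace_mul_le_re_trace hS (mul_mem (mul_mem hU₃ hU₂) (Unitary.star_mem hU₁))

theorem exists_trace_conjTranspose_mul_psqrt_eq_fidelity {ρ σ : Matrix n n ℂ}
    (hρ : ρ.PosSemidef) (hσ : σ.PosSemidef) :
    ∃ A : Matrix n n ℂ, A * Aᴴ = ρ ∧ (Aᴴ * psqrt σ).trace = fidelity ρ σ := by
  obtain ⟨U, hU, hY⟩ := exists_mem_unitaryGroup_eq_psqrt_mul (psqrt ρ * psqrt σ)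
  have hS := posSemidef_psqrt (posSemidef_self_mul_conjTranspose (psqrt ρ * psqrt σ))
  rw [fidelity_eq_re_trace_psqrt hρ hσ]
  set S := psqrt ((psqrt ρ * psqrt σ) * (psqrt ρ * psqrt σ)ᴴ)
  refine ⟨psqrt ρ * U, ?_, ?_⟩
  · rw [conjTranspose_mul, (posSemidef_psqrt hρ).1.eq, Matrix.mul_assoc, ← Matrix.mul_assoc U,
      ← star_eq_conjTranspose, mem_unitaryGroup_iff.mp hU, Matrix.one_mul, psqrt_mul_psqrt hρ]
  · rw [conjTranspose_mul, (posSemidef_psqrt hρ).1.eq, Matrix.mul_assoc, hY,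
      ← Matrix.mul_assoc, trace_mul_comm, ← Matrix.mul_assoc, ← star_eq_conjTranspose,
      mem_unitaryGroup_iff.mp hU, Matrix.one_mul, hS.1.trace_eq_sum_eigenvalues]
    simp

end Uhlmann

section RealPart

variable {n : Type*} {ρ : Matrix n n ℂ}

theorem mconj_reState : mconj (reState ρ) = reState ρ := by
  ext i j
  simp [reState, mconj, add_comm, mul_add, map_ofNat]

theorem Matrix.PosSemidef.reState (hρ : ρ.PosSemidef) : (_root_.reState ρ).PosSemidef :=
  (hρ.add hρ.mconj).smul (by positivity)

theorem fidelity_reState_sq_le [Fintype n] [DecidableEq n] (hρ : ρ.PosSemidef)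
    (htr : ρ.trace = 1) :
    fidelity ρ (reState ρ) ^ 2 ≤ (1 + fidelity ρ (mconj ρ)) / 2 := by
  set τ := reState ρ
  have hτ : τ.PosSemidef := hρ.reState
  have hτtr : τ.trace = 1 := by
    simp only [τ, _root_.reState, trace_smul, trace_add, trace_mconj, htr, star_one]
    norm_num
  set G := psqrt τ
  have hG : mconj G = G := by rw [← psqrt_mconj hτ, mconj_reState]
  have hGG : (Gᴴ * G).trace = 1 := by
    rw [(posSemidef_psqrt hτ).1.eq, psqrt_mul_psqrt hτ, hτtr]
  obtain ⟨A, hAA, hAG⟩ := exists_trace_conjTranspose_mul_psqrt_eq_fidelity hρ hτ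
  set F := fidelity ρ τ
  have hAG' : ((mconj A)ᴴ * G).trace = F := by
    rw [← hG, conjTranspose_mconj, ← mconj_mul, trace_mconj, hAG]
    simp
  have hA : (Aᴴ * A).trace = 1 := by rw [trace_mul_comm, hAA, htr]
  have hA' : ((mconj A)ᴴ * mconj A).trace = 1 := by
    rw [conjTranspose_mconj, ← mconj_mul, trace_mconj, hA, star_one]
  have hcross : ((mconj A)ᴴ * A).trace = star (Aᴴ * mconj A).trace := by
    rw [← trace_mconj, mconj_mul, conjTranspose_mconj, mconj_mconj]
  have hUhlmann : (Aᴴ * mconj A).trace.re ≤ fidelity ρ (mconj ρ) := by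
    have h := norm_trace_conjTranspose_mul_le_fidelity A (mconj A)
    rw [hAA, conjTranspose_mconj, ← mconj_mul, hAA] at h
    exact (Complex.re_le_norm _).trans h
  have hCS := norm_trace_conjTranspose_mul_sq_le (A + mconj A) G
  rw [conjTranspose_add, Matrix.add_mul, trace_add, hAG, hAG', Matrix.add_mul, Matrix.mul_add,
    Matrix.mul_add, trace_add, trace_add, trace_add, hA, hA', hcross, hGG, ← Complex.ofReal_add,
    Complex.norm_real, Real.norm_eq_abs, sq_abs] at hCS
  simp only [RCLike.re_to_complex, Complex.add_re, Complex.one_re, Complex.star_def,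
    Complex.conj_re, mul_one] at hCS
  nlinarith

end RealPart

theorem stmt8 (d : ℕ) (ρ : Matrix (Fin d) (Fin d) ℂ) (hρ : IsDensityMatrix ρ) :
    Mg ρ ≤ 1 - (1 - MRe ρ) ^ 2 := by
  have h := fidelity_reState_sq_le hρ.1 hρ.2
  rw [Mg, MRe, sub_sub_cancel]
  linarith
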